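/- Let B be an edge-clean bidirected graph rooted at r, and let T and T' be proper r-trails of B (each containing at least one trail-directable edge). If T and T' share an edge, then they share a trail-directable edge. -/

import Mathlib

/-- A bidirected graph: a loopless multigraph together with a signing of each
half-edge (edge-endpoint incidence) by a sign (`true` = `+`, `false` = `-`). -/
structure BidirGraph (V : Type) (E : Type) where
  ends : E → V × V
  sign : E → V → Bool
  loopless : ∀ e : E, (ends e).1 ≠ (ends e).2

namespace BidirGraph

variable {V E : Type}

/-- The head of an oriented edge `(e, b)`: `b = true` orients `e` from its first
endpoint to its second endpoint. -/
def ohead (B : BidirGraph V E) (oe : E × Bool) : V :=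
  if oe.2 then (B.ends oe.1).2 else (B.ends oe.1).1

/-- The tail of an oriented edge. -/
def otail (B : BidirGraph V E) (oe : E × Bool) : V :=
  if oe.2 then (B.ends oe.1).1 else (B.ends oe.1).2

/-- `e` is incident with `v`. -/
def Incident (B : BidirGraph V E) (e : E) (v : V) : Prop :=
  (B.ends e).1 = v ∨ (B.ends e).2 = v

/-- `L` is a trail starting at `v`: a sequence of oriented edges, with no repeated
underlying edge, consecutive edges sharing a vertex at which they have opposite signs. -/
def IsTrailFrom (B : BidirGraph V E) (v : V) (L : List (E × Bool)) : Prop :=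
  (L.map Prod.fst).Nodup ∧
  (∀ oe ∈ L.head?, B.otail oe = v) ∧
  L.Chain' (fun a b => B.ohead a = B.otail b ∧ B.sign a.1 (B.ohead a) ≠ B.sign b.1 (B.ohead a))

/-- The final vertex of a trail starting at `v`. -/
def trailEnd (B : BidirGraph V E) (v : V) (L : List (E × Bool)) : V :=
  match L.getLast? with
  | none => v
  | some oe => B.ohead oe

/-- The internal vertices of a trail: the heads of all edges except the last one. -/
def Internal (B : BidirGraph V E) (L : List (E × Bool)) : List V :=
  (L.map B.ohead).dropLast

/-- An `r`-trail: a trail starting at `r` with no internal vertex equal to `r`. -/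
def IsRTrail (B : BidirGraph V E) (r : V) (L : List (E × Bool)) : Prop :=
  B.IsTrailFrom r L ∧ ∀ v ∈ B.Internal L, v ≠ r

/-- The trail `L` ends at vertex `w` with sign `α`. -/
def EndsAtSigned (B : BidirGraph V E) (L : List (E × Bool)) (w : V) (α : Bool) : Prop :=
  ∃ oe, L.getLast? = some oe ∧ B.ohead oe = w ∧ B.sign oe.1 w = α

/-- A path: a trail with no repeated vertex. -/
def IsPathFrom (B : BidirGraph V E) (v : V) (L : List (E × Bool)) : Prop :=
  B.IsTrailFrom v L ∧ (v :: L.map B.ohead).Nodup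

/-- An almost path: a trail that is trivial or becomes a path after removing its last edge. -/
def IsAlmostPathFrom (B : BidirGraph V E) (v : V) (L : List (E × Bool)) : Prop :=
  B.IsTrailFrom v L ∧ (v :: B.Internal L).Nodup

/-- An edge is trail-undirectable if there are `r`-trails ending in both of its orientations. -/
def TrailUndirectable (B : BidirGraph V E) (r : V) (e : E) : Prop :=
  (∃ L, B.IsRTrail r L ∧ L.getLast? = some (e, true)) ∧
  (∃ L, B.IsRTrail r L ∧ L.getLast? = some (e, false))

/-- `(e, b)` is the natural orientation of the trail-directable edge `e`: `r`-trails end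
in the orientation `(e, b)` but not in the opposite orientation. -/
def NatOrient (B : BidirGraph V E) (r : V) (e : E) (b : Bool) : Prop :=
  (∃ L, B.IsRTrail r L ∧ L.getLast? = some (e, b)) ∧
  ¬ ∃ L, B.IsRTrail r L ∧ L.getLast? = some (e, !b)

/-- An edge is trail-directable if exactly one of its orientations is the final oriented
edge of some `r`-trail. -/
def TrailDirectable (B : BidirGraph V E) (r : V) (e : E) : Prop :=
  ∃ b, B.NatOrient r e b

/-- `B` is trail-reachable: every edge is the final edge of some `r`-trail. -/
def TrailReachable (B : BidirGraph V E) (r : V) : Prop :=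
  ∀ e : E, ∃ L b, B.IsRTrail r L ∧ L.getLast? = some (e, b)

/-- Adjacency of trail-undirectable edges: both undirectable and sharing an endpoint. -/
def UStep (B : BidirGraph V E) (r : V) (a b : E) : Prop :=
  B.TrailUndirectable r a ∧ B.TrailUndirectable r b ∧ ∃ v, B.Incident a v ∧ B.Incident b v

/-- `C` is (the edge set of) a nontrivial trail-undirectable component of `B`: the set of
trail-undirectable edges connected to some trail-undirectable edge `e` inside the subgraph
induced by the trail-undirectable edges. -/
def IsUComp (B : BidirGraph V E) (r : V) (C : Set E) : Prop :=
  ∃ e, B.TrailUndirectable r e ∧ C = {f | Relation.ReflTransGen (B.UStep r) e f}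

/-- `v` is a vertex of the edge set `C` (i.e. an endpoint of one of its edges). -/
def VC (B : BidirGraph V E) (C : Set E) (v : V) : Prop :=
  ∃ e ∈ C, B.Incident e v

/-- `B` is edge-clean: the root lies in no nontrivial trail-undirectable component. -/
def EdgeClean (B : BidirGraph V E) (r : V) : Prop :=
  ¬ ∃ C : Set E, B.IsUComp r C ∧ B.VC C r

/-- `B` is clean: there is no nontrivial almost path starting and ending at `r`. -/
def Clean (B : BidirGraph V E) (r : V) : Prop :=
  ¬ ∃ L, L ≠ ([] : List (E × Bool)) ∧ B.IsAlmostPathFrom r L ∧ B.trailEnd r L = r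

/-- A vertex is trail-solid if it is the root, or the head of the natural orientation of a
trail-directable edge, or incident with no trail-undirectable edge. -/
def TrailSolid (B : BidirGraph V E) (r v : V) : Prop :=
  v = r ∨ (∃ e b, B.NatOrient r e b ∧ B.ohead (e, b) = v) ∨
    (∀ e : E, B.Incident e v → ¬ B.TrailUndirectable r e)

/-- Two trails are edge-disjoint if no underlying edge occurs in both. -/
def EdgeDisj (L₁ L₂ : List (E × Bool)) : Prop :=
  ∀ (e : E) (b₁ b₂ : Bool), (e, b₁) ∈ L₁ → (e, b₂) ∈ L₂ → False

/-- Two paths are internally vertex-disjoint if they share no internal vertex. -/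
def IntDisj (B : BidirGraph V E) (L₁ L₂ : List (E × Bool)) : Prop :=
  ∀ w : V, w ∈ B.Internal L₁ → w ∈ B.Internal L₂ → False

end BidirGraph


/-!
The first edge `e` of `T` lying on `T'` is itself trail-directable; the parts `P`, `P'` of `T`, `T'`
before `e` are edge-disjoint. If `T` and `T'` traverse `e` in opposite directions, following `T` up
to `e` and then `T'` backwards gives an `r`-trail ending in the reverse of the first edge of `T'`:
that edge is incident with `r` and reached in both orientations, against edge-cleanness. If they
traverse `e` in the same direction and `e` is undirectable, some `r`-trail `Q` ends in the reverse
of `e`; rerouting at the last edge of `Q` on `P ∪ P'` either reaches the first case or gives the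
same configuration with a shorter `Q`.
-/

namespace List

variable {α : Type*} {p : α → Prop}

theorem exists_eq_append_cons_of_first {l : List α} (h : ∃ x ∈ l, p x) :
    ∃ l₁ x l₂, l = l₁ ++ x :: l₂ ∧ p x ∧ ∀ y ∈ l₁, ¬ p y := by
  classical
  obtain ⟨x, hx, hpx⟩ := h
  obtain ⟨y, hy⟩ := Option.isSome_iff_exists.1
    (find?_isSome (p := fun x => decide (p x)) |>.2 ⟨x, hx, by simpa using hpx⟩)
  obtain ⟨hpy, l₁, l₂, rfl, hl₁⟩ := find?_eq_some_iff_append.1 hy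
  exact ⟨l₁, y, l₂, rfl, by simpa using hpy, fun z hz => by simpa using hl₁ z hz⟩

theorem exists_eq_append_cons_of_last {l : List α} (h : ∃ x ∈ l, p x) :
    ∃ l₁ x l₂, l = l₁ ++ x :: l₂ ∧ p x ∧ ∀ y ∈ l₂, ¬ p y := by
  obtain ⟨l₁, x, l₂, hl, hpx, hl₁⟩ :=
    exists_eq_append_cons_of_first (l := l.reverse) (by simpa using h)
  refine ⟨l₂.reverse, x, l₁.reverse, ?_, hpx, by simpa using hl₁⟩
  simpa using congrArg reverse hl

end List

namespace BidirGraph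

variable {V E : Type}

def reverseEdge (oe : E × Bool) : E × Bool := (oe.1, !oe.2)

def reverseTrail (L : List (E × Bool)) : List (E × Bool) := (L.map reverseEdge).reverse

def Linked (B : BidirGraph V E) (a b : E × Bool) : Prop :=
  B.ohead a = B.otail b ∧ B.sign a.1 (B.ohead a) ≠ B.sign b.1 (B.ohead a)

def IsTrail (B : BidirGraph V E) (L : List (E × Bool)) : Prop :=
  (L.map Prod.fst).Nodup ∧ L.IsChain B.Linked

structure IsBadTriple (B : BidirGraph V E) (r : V) (Q P₁ P₂ : List (E × Bool)) (x : E × Bool) :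
    Prop where
  left : B.IsRTrail r (P₁ ++ [x])
  right : B.IsRTrail r (P₂ ++ [x])
  reverse : B.IsRTrail r (Q ++ [reverseEdge x])
  disjoint : (P₁.map Prod.fst).Disjoint (P₂.map Prod.fst)

variable {B : BidirGraph V E} {r : V}

@[simp] lemma fst_reverseEdge (oe : E × Bool) : (reverseEdge oe).1 = oe.1 := rfl

@[simp] lemma reverseEdge_reverseEdge (oe : E × Bool) : reverseEdge (reverseEdge oe) = oe := by
  simp [reverseEdge]

@[simp] lemma reverseEdge_mk (e : E) (b : Bool) : reverseEdge (e, b) = (e, !b) := rfl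

@[simp] lemma ohead_reverseEdge (oe : E × Bool) : B.ohead (reverseEdge oe) = B.otail oe := by
  obtain ⟨e, _ | _⟩ := oe <;> rfl

@[simp] lemma otail_reverseEdge (oe : E × Bool) : B.otail (reverseEdge oe) = B.ohead oe := by
  obtain ⟨e, _ | _⟩ := oe <;> rfl

lemma incident_otail (oe : E × Bool) : B.Incident oe.1 (B.otail oe) := by
  obtain ⟨e, _ | _⟩ := oe <;> simp [Incident, otail]

lemma Linked.reverseEdge {a b : E × Bool} (h : B.Linked a b) :
    B.Linked (reverseEdge b) (reverseEdge a) := by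
  obtain ⟨hab, hsign⟩ := h
  exact ⟨by simp [hab], by simpa [hab] using hsign.symm⟩

@[simp] lemma reverseTrail_nil : reverseTrail ([] : List (E × Bool)) = [] := rfl

@[simp] lemma reverseTrail_cons (a : E × Bool) (L : List (E × Bool)) :
    reverseTrail (a :: L) = reverseTrail L ++ [reverseEdge a] := by
  simp [reverseTrail]

@[simp] lemma map_fst_reverseTrail (L : List (E × Bool)) :
    (reverseTrail L).map Prod.fst = (L.map Prod.fst).reverse := by
  simp [reverseTrail, Function.comp_def]

@[simp] lemma map_otail_reverseTrail (L : List (E × Bool)) :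
    (reverseTrail L).map B.otail = (L.map B.ohead).reverse := by
  simp [reverseTrail, Function.comp_def]

lemma isTrail_append {L M : List (E × Bool)} :
    B.IsTrail (L ++ M) ↔ B.IsTrail L ∧ B.IsTrail M ∧
      (L.map Prod.fst).Disjoint (M.map Prod.fst) ∧
      ∀ a ∈ L.getLast?, ∀ b ∈ M.head?, B.Linked a b := by
  simp only [IsTrail, List.map_append, List.nodup_append', List.isChain_append]
  tauto

lemma IsTrail.reverseTrail {L : List (E × Bool)} (h : B.IsTrail L) :
    B.IsTrail (reverseTrail L) := by
  refine ⟨by simpa using h.1, ?_⟩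
  simp only [BidirGraph.reverseTrail, List.isChain_reverse, List.isChain_map]
  exact h.2.imp fun _ _ hab => hab.reverseEdge

lemma isRTrail_iff {L : List (E × Bool)} :
    B.IsRTrail r L ↔
      B.IsTrail L ∧ (∀ oe ∈ L.head?, B.otail oe = r) ∧ ∀ v ∈ B.Internal L, v ≠ r :=
  ⟨fun ⟨⟨hn, hr, hc⟩, hi⟩ => ⟨⟨hn, hc⟩, hr, hi⟩, fun ⟨⟨hn, hc⟩, hr, hi⟩ => ⟨⟨hn, hr, hc⟩, hi⟩⟩

lemma IsRTrail.isTrail {L : List (E × Bool)} (h : B.IsRTrail r L) : B.IsTrail L :=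
  (isRTrail_iff.1 h).1

lemma map_otail_tail {L : List (E × Bool)} (h : L.IsChain B.Linked) :
    (L.map B.otail).tail = B.Internal L := by
  induction L with
  | nil => rfl
  | cons a L ih =>
    cases L with
    | nil => rfl
    | cons b L =>
      obtain ⟨hab, hL⟩ := List.isChain_cons_cons.1 h
      simp only [Internal, List.map_cons, List.tail_cons, List.dropLast_cons_cons] at ih ⊢
      rw [hab.1, ih hL]

lemma internal_append {L M : List (E × Bool)} (h : (L ++ M).IsChain B.Linked) (hL : L ≠ []) :
    B.Internal (L ++ M) = B.Internal L ++ M.map B.otail := by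
  rw [← map_otail_tail h, ← map_otail_tail (List.isChain_append.1 h).1, List.map_append,
    List.tail_append_of_ne_nil (by simpa using hL)]

lemma internal_append_of_ne_nil (L : List (E × Bool)) {M : List (E × Bool)} (hM : M ≠ []) :
    B.Internal (L ++ M) = L.map B.ohead ++ B.Internal M := by
  rw [Internal, List.map_append, List.dropLast_append_of_ne_nil (by simpa using hM)]
  rfl

lemma IsRTrail.otail_ne {L M : List (E × Bool)} (h : B.IsRTrail r (L ++ M)) (hL : L ≠ []) :
    ∀ oe ∈ M, B.otail oe ≠ r := fun oe hoe =>
  (isRTrail_iff.1 h).2.2 _ <| by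
    rw [internal_append h.isTrail.2 hL]
    exact List.mem_append_right _ (List.mem_map_of_mem hoe)

lemma IsRTrail.ohead_ne {L M : List (E × Bool)} (h : B.IsRTrail r (L ++ M)) (hM : M ≠ []) :
    ∀ oe ∈ L, B.ohead oe ≠ r := fun oe hoe =>
  (isRTrail_iff.1 h).2.2 _ <| by
    rw [internal_append_of_ne_nil L hM]
    exact List.mem_append_left _ (List.mem_map_of_mem hoe)

lemma IsRTrail.otail_head {a : E × Bool} {L : List (E × Bool)} (h : B.IsRTrail r (a :: L)) :
    B.otail a = r :=
  (isRTrail_iff.1 h).2.1 a rfl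

lemma IsRTrail.of_append {L M : List (E × Bool)} (h : B.IsRTrail r (L ++ M)) :
    B.IsRTrail r L := by
  obtain ⟨ht, hr, hi⟩ := isRTrail_iff.1 h
  refine isRTrail_iff.2 ⟨(isTrail_append.1 ht).1, fun oe hoe => hr oe ?_, fun v hv => ?_⟩
  · cases L with
    | nil => simp at hoe
    | cons a L => simpa using hoe
  · by_cases hM : M = []
    · subst hM
      exact hi v (by simpa using hv)
    · obtain ⟨oe, hoe, rfl⟩ := List.mem_map.1 (List.dropLast_subset _ hv)
      exact h.ohead_ne hM oe hoe

lemma IsRTrail.of_append_cons {L M : List (E × Bool)} {a : E × Bool}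
    (h : B.IsRTrail r (L ++ a :: M)) : B.IsRTrail r (L ++ [a]) :=
  IsRTrail.of_append (M := M) (by simpa using h)

lemma IsRTrail.append {L M : List (E × Bool)} (hL : B.IsRTrail r L) (hL₀ : L ≠ [])
    (hM : B.IsTrail M) (hdisj : (L.map Prod.fst).Disjoint (M.map Prod.fst))
    (hlink : ∀ a ∈ L.getLast?, ∀ b ∈ M.head?, B.Linked a b) (hr : ∀ oe ∈ M, B.otail oe ≠ r) :
    B.IsRTrail r (L ++ M) := by
  obtain ⟨-, hLr, hLi⟩ := isRTrail_iff.1 hL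
  have ht : B.IsTrail (L ++ M) := isTrail_append.2 ⟨hL.isTrail, hM, hdisj, hlink⟩
  refine isRTrail_iff.2 ⟨ht, fun oe hoe => hLr oe ?_, fun v hv => ?_⟩
  · rwa [List.head?_append_of_ne_nil _ hL₀] at hoe
  · rw [internal_append ht.2 hL₀, List.mem_append, List.mem_map] at hv
    rcases hv with hv | ⟨oe, hoe, rfl⟩
    exacts [hLi v hv, hr oe hoe]

lemma IsRTrail.splice {A Q M : List (E × Bool)} {y : E × Bool} (hA : B.IsRTrail r (A ++ [y]))
    (hQ : B.IsRTrail r (Q ++ y :: M)) (hdisj : (A.map Prod.fst).Disjoint (M.map Prod.fst)) :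
    B.IsRTrail r (A ++ y :: M) := by
  replace hQ : B.IsRTrail r ((Q ++ [y]) ++ M) := by simpa using hQ
  obtain ⟨-, hM, hyM, hlink⟩ := isTrail_append.1 hQ.isTrail
  simpa using hA.append (by simp) hM (by simp_all) (by simpa using hlink) (hQ.otail_ne (by simp))

lemma IsRTrail.append_reverseTrail {P Q K : List (E × Bool)} {x : E × Bool}
    (hP : B.IsRTrail r (P ++ [x])) (hK : B.IsRTrail r (Q ++ K ++ [reverseEdge x]))
    (hdisj : (P.map Prod.fst).Disjoint (K.map Prod.fst)) :
    B.IsRTrail r (P ++ x :: reverseTrail K) := by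
  obtain ⟨-, hKx, -, -⟩ := isTrail_append.1 (by simpa using hK.isTrail :
    B.IsTrail (Q ++ (K ++ [reverseEdge x])))
  obtain ⟨hK', -, hxK, hlink⟩ := isTrail_append.1 hKx
  have hr : ∀ oe ∈ reverseTrail K, B.otail oe ≠ r := by
    intro oe hoe
    obtain ⟨k, hk, hkoe⟩ : ∃ k ∈ K, B.ohead k = B.otail oe := by
      simpa using List.mem_map_of_mem (f := B.otail) hoe
    exact hkoe ▸ hK.ohead_ne (by simp) k (by simp [hk])
  have hglue := hP.append (by simp) hK'.reverseTrail ?_ ?_ hr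
  · simpa using hglue
  · simp_all
  · rcases List.eq_nil_or_concat K with rfl | ⟨K', k, rfl⟩
    · simp
    · simpa [reverseTrail] using (hlink k (by simp) _ rfl).reverseEdge

lemma trailUndirectable_of_reverseEdge {L M : List (E × Bool)} {x : E × Bool}
    (hL : B.IsRTrail r (L ++ [x])) (hM : B.IsRTrail r (M ++ [reverseEdge x])) :
    B.TrailUndirectable r x.1 := by
  obtain ⟨e, _ | _⟩ := x
  · exact ⟨⟨_, hM, by simp⟩, ⟨_, hL, by simp⟩⟩
  · exact ⟨⟨_, hL, by simp⟩, ⟨_, hM, by simp⟩⟩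

lemma EdgeClean.not_trailUndirectable (hclean : B.EdgeClean r) {e : E} (he : B.Incident e r) :
    ¬ B.TrailUndirectable r e :=
  fun hund => hclean ⟨_, ⟨e, hund, rfl⟩, e, Relation.ReflTransGen.refl, he⟩

lemma EdgeClean.not_disjoint_of_reverseEdge (hclean : B.EdgeClean r) {P Q : List (E × Bool)}
    {x : E × Bool} (hP : B.IsRTrail r (P ++ [x])) (hQ : B.IsRTrail r (Q ++ [reverseEdge x])) :
    ¬ (P.map Prod.fst).Disjoint (Q.map Prod.fst) := by
  intro hdisj
  cases Q with
  | nil =>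
    have hx : B.Incident x.1 r := by
      simpa using hQ.otail_head ▸ incident_otail (B := B) (reverseEdge x)
    exact hclean.not_trailUndirectable hx (trailUndirectable_of_reverseEdge hP hQ)
  | cons q Q =>
    have hglue := hP.append_reverseTrail (Q := []) (by simpa using hQ) hdisj
    have hq : B.IsRTrail r ([] ++ [q]) := IsRTrail.of_append_cons (M := Q ++ [reverseEdge x]) hQ
    exact hclean.not_trailUndirectable (hQ.otail_head ▸ incident_otail q)
      (trailUndirectable_of_reverseEdge hq (M := P ++ x :: reverseTrail Q) (by simpa using hglue))

lemma IsBadTriple.symm {Q P₁ P₂ : List (E × Bool)} {x : E × Bool}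
    (h : B.IsBadTriple r Q P₁ P₂ x) : B.IsBadTriple r Q P₂ P₁ x :=
  ⟨h.right, h.left, h.reverse, h.disjoint.symm⟩

/-- Write `P₁ = A ++ z :: C` with `z.1 = y.1`. If `z = y`, then `A ++ y :: W` reaches
`reverseEdge x` edge-disjointly from `P₂`, which `not_disjoint_of_reverseEdge` forbids. Otherwise
`y = reverseEdge z`, and `A`, `P₂ ++ x :: reverseTrail W`, `Q` form a bad triple at `z`. -/
lemma EdgeClean.exists_isBadTriple_of_last_hit (hclean : B.EdgeClean r)
    {Q W P₁ P₂ : List (E × Bool)} {x y : E × Bool} (h : B.IsBadTriple r (Q ++ y :: W) P₁ P₂ x)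
    (hy : y.1 ∈ P₁.map Prod.fst) (hW₁ : (W.map Prod.fst).Disjoint (P₁.map Prod.fst))
    (hW₂ : (W.map Prod.fst).Disjoint (P₂.map Prod.fst)) :
    ∃ P₁' P₂' x', B.IsBadTriple r Q P₁' P₂' x' := by
  obtain ⟨z, hz, hzy⟩ := List.mem_map.1 hy
  obtain ⟨A, C, rfl⟩ := List.append_of_mem hz
  have hAz : B.IsRTrail r (A ++ [z]) :=
    IsRTrail.of_append_cons (M := C ++ [x]) (by simpa using h.left)
  have hxP₁ : x.1 ∉ (A ++ z :: C).map Prod.fst :=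
    fun hx => (isTrail_append.1 h.left.isTrail).2.2.1 hx (by simp)
  have hQ : B.IsRTrail r (Q ++ y :: (W ++ [reverseEdge x])) := by simpa using h.reverse
  have hP₂ := h.disjoint
  simp only [List.map_append, List.map_cons, List.disjoint_append_left, List.disjoint_cons_left,
    List.disjoint_append_right, List.disjoint_cons_right, List.mem_append, List.mem_cons,
    not_or] at hW₁ hP₂ hxP₁
  obtain ⟨hWA, -, -⟩ := hW₁
  obtain ⟨hAP₂, hzP₂, -⟩ := hP₂
  obtain ⟨hxA, -, -⟩ := hxP₁
  by_cases hsame : z = y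
  · subst hsame
    have hAW : (A.map Prod.fst).Disjoint ((W ++ [reverseEdge x]).map Prod.fst) := by
      simp only [List.map_append, List.map_cons, List.map_nil, fst_reverseEdge,
        List.disjoint_append_right, List.disjoint_cons_right, List.disjoint_nil_right, and_true]
      exact ⟨hWA.symm, hxA⟩
    have hK : B.IsRTrail r ((A ++ z :: W) ++ [reverseEdge x]) := by
      simpa using hAz.splice hQ hAW
    refine (hclean.not_disjoint_of_reverseEdge h.right hK ?_).elim
    simp only [List.map_append, List.map_cons, List.disjoint_append_right, List.disjoint_cons_right]
    exact ⟨hAP₂.symm, hzP₂, hW₂.symm⟩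
  · have hyz : y = reverseEdge z := by
      obtain ⟨e, b⟩ := z; obtain ⟨e', b'⟩ := y
      cases b <;> cases b' <;> simp_all
    have hP₂yW : (P₂.map Prod.fst).Disjoint ((y :: W).map Prod.fst) := by
      simp only [List.map_cons, List.disjoint_cons_right]
      exact ⟨hyz ▸ hzP₂, hW₂.symm⟩
    refine ⟨A, P₂ ++ x :: reverseTrail W, z, hAz, ?_, ?_, ?_⟩
    · simpa [hyz] using h.right.append_reverseTrail (Q := Q) (K := y :: W)
        (by simpa using h.reverse) hP₂yW
    · simpa [hyz] using hQ.of_append_cons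
    · simp only [List.map_append, List.map_cons, map_fst_reverseTrail, List.disjoint_append_right,
        List.disjoint_cons_right, List.disjoint_reverse_right]
      exact ⟨hAP₂, hxA, hWA.symm⟩

lemma EdgeClean.not_isBadTriple (hclean : B.EdgeClean r) (Q : List (E × Bool)) :
    ∀ P₁ P₂ x, ¬ B.IsBadTriple r Q P₁ P₂ x := by
  induction hn : Q.length using Nat.strong_induction_on generalizing Q with
  | _ n ih =>
  intro P₁ P₂ x h
  by_cases hhit : ∃ y ∈ Q, y.1 ∈ P₁.map Prod.fst ∨ y.1 ∈ P₂.map Prod.fst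
  · obtain ⟨Q', y, W, rfl, hy, hW⟩ := List.exists_eq_append_cons_of_last hhit
    have hW₁ : (W.map Prod.fst).Disjoint (P₁.map Prod.fst) := by grind [List.Disjoint]
    have hW₂ : (W.map Prod.fst).Disjoint (P₂.map Prod.fst) := by grind [List.Disjoint]
    obtain ⟨P₁', P₂', x', h'⟩ := hy.elim
      (hclean.exists_isBadTriple_of_last_hit h · hW₁ hW₂)
      (hclean.exists_isBadTriple_of_last_hit h.symm · hW₂ hW₁)
    exact ih Q'.length (by simp [← hn]) Q' rfl P₁' P₂' x' h'
  · exact hclean.not_disjoint_of_reverseEdge h.left h.reverse (by grind [List.Disjoint])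

lemma EdgeClean.trailDirectable_of_disjoint (hclean : B.EdgeClean r) {P P' : List (E × Bool)}
    {e : E} {b b' : Bool} (hP : B.IsRTrail r (P ++ [(e, b)]))
    (hP' : B.IsRTrail r (P' ++ [(e, b')])) (hdisj : (P.map Prod.fst).Disjoint (P'.map Prod.fst)) :
    B.TrailDirectable r e := by
  by_contra hdir
  have hrev : ∃ Q, B.IsRTrail r (Q ++ [(e, !b)]) := by
    by_contra hno
    refine hdir ⟨b, ⟨_, hP, by simp⟩, fun ⟨L, hL, hlast⟩ => hno ?_⟩
    obtain ⟨Q, rfl⟩ := List.getLast?_eq_some_iff.1 hlast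
    exact ⟨Q, hL⟩
  obtain ⟨Q, hQ⟩ := hrev
  by_cases hb : b' = b
  · subst hb
    exact hclean.not_isBadTriple Q P P' (e, b') ⟨hP, hP', hQ, hdisj⟩
  · obtain rfl := Bool.eq_not_of_ne hb
    exact hclean.not_disjoint_of_reverseEdge hP hP' hdisj

end BidirGraph

open BidirGraph in
theorem stmt4_general {V E : Type} (B : BidirGraph V E) (r : V)
    (hclean : B.EdgeClean r)
    (T T' : List (E × Bool))
    (hT : B.IsRTrail r T) (hT' : B.IsRTrail r T')
    (hshare : ∃ (e : E) (b b' : Bool), (e, b) ∈ T ∧ (e, b') ∈ T') :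
    ∃ (e : E) (b b' : Bool), (e, b) ∈ T ∧ (e, b') ∈ T' ∧ B.TrailDirectable r e := by
  obtain ⟨e, b, b', he, he'⟩ := hshare
  obtain ⟨T₁, ⟨f, c⟩, T₂, rfl, hf, hfirst⟩ :=
    List.exists_eq_append_cons_of_first (p := fun oe => oe.1 ∈ T'.map Prod.fst)
      ⟨(e, b), he, List.mem_map_of_mem he'⟩
  obtain ⟨⟨f', c'⟩, hc', hf'⟩ := List.mem_map.1 hf
  obtain rfl : f = f' := hf'.symm
  obtain ⟨T'₁, T'₂, rfl⟩ := List.append_of_mem hc'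
  have hdisj : (T₁.map Prod.fst).Disjoint (T'₁.map Prod.fst) := by
    intro d hd hd'
    obtain ⟨oe, hoe, rfl⟩ := List.mem_map.1 hd
    exact hfirst oe hoe (by simp_all)
  exact ⟨f, c, c', by simp, by simp,
    hclean.trailDirectable_of_disjoint hT.of_append_cons hT'.of_append_cons hdisj⟩

open BidirGraph in
/-- In an edge-clean rooted bidirected graph, two proper `r`-trails (each
containing a trail-directable edge) that share an edge must share a trail-directable edge. -/
theorem stmt4 {V E : Type} (B : BidirGraph V E) (r : V)
    (hclean : B.EdgeClean r)
    (T T' : List (E × Bool))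
    (hT : B.IsRTrail r T) (hT' : B.IsRTrail r T')
    (hTproper : ∃ oe ∈ T, B.TrailDirectable r oe.1)
    (hT'proper : ∃ oe ∈ T', B.TrailDirectable r oe.1)
    (hshare : ∃ (e : E) (b b' : Bool), (e, b) ∈ T ∧ (e, b') ∈ T') :
    ∃ (e : E) (b b' : Bool), (e, b) ∈ T ∧ (e, b') ∈ T' ∧ B.TrailDirectable r e :=
  stmt4_general B r hclean T T' hT hT' hshare
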